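/- Let γ = ℵ_β be a strong limit cardinal with cf(γ) = ℵ₀ such that 2^γ = γ^{+ω₁+1} = ℵ_{β+ω₁+1}. Then the cardinal γ^{+ω₁} = ℵ_{β+ω₁} satisfies cf(γ^{+ω₁}) = ℵ₁ and (γ^{+ω₁})^{ℵ₀} > γ^{+ω₁}. -/

import Mathlib

/-!
The cofinality of `ℵ_{β+ω₁}` is that of `ω₁`, namely `ℵ₁`. A strong limit `γ` is the union of
`cf γ` initial segments, each of size `< γ`, so `2^γ ≤ ∏ 2^{<γ} ≤ γ^{cf γ}`. With `cf γ = ℵ₀`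
this gives `ℵ_{β+ω₁} < ℵ_{β+ω₁+1} = 2^γ ≤ γ^{ℵ₀} ≤ (ℵ_{β+ω₁})^{ℵ₀}`.
-/

open Cardinal

open Ordinal Set in
theorem Cardinal.IsStrongLimit.two_power_le_power_cof {c : Cardinal} (hc : c.IsStrongLimit) :
    2 ^ c ≤ c ^ c.ord.cof := by
  induction c using Cardinal.inductionOn with | mk α
  obtain ⟨_, _, hα⟩ := exists_ord_eq_type_lt α
  have : NoMaxOrder α := by
    rw [← isSuccPrelimit_type_lt_iff, ← hα]
    exact (isSuccLimit_ord hc.aleph0_le).isSuccPrelimit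
  obtain ⟨s, hs, hs'⟩ := exists_ord_cof_eq α
  have hcover : #α ≤ sum fun i : s ↦ #(Iio i.1) := by
    rw [← mk_univ, ← isCofinal_iff_iUnion_Iio_eq_univ.1 hs, biUnion_eq_iUnion]
    exact mk_iUnion_le_sum_mk
  rw [hα, cof_type, ← card_ord (Order.cof _), ← hs', card_type, ← prod_const' s]
  calc 2 ^ #α ≤ 2 ^ sum fun i : s ↦ #(Iio i.1) := power_le_power_left two_ne_zero hcover
    _ = prod fun i : s ↦ 2 ^ #(Iio i.1) := power_sum _ _
    _ ≤ prod fun _ : s ↦ #α :=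
      prod_le_prod _ _ fun i ↦ (hc.isStrongPrelimit (mk_Iio_lt i.1 hα)).le

open Ordinal in
theorem Cardinal.cof_ord_aleph_add (β : Ordinal) {o : Ordinal} (ho : Order.IsSuccLimit o) :
    (aleph (β + o)).ord.cof = o.cof := by
  rw [ord_aleph, cof_omega (isSuccLimit_add β ho), cof_add β ho.ne_bot]

/-- Let `γ = ℵ_β` be a strong limit cardinal with `cf(γ) = ℵ₀` such that
`2^γ = γ^{+ω₁+1} = ℵ_{β+ω₁+1}`. Then `γ^{+ω₁} = ℵ_{β+ω₁}` satisfies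
`cf(γ^{+ω₁}) = ℵ₁` and `(γ^{+ω₁})^{ℵ₀} > γ^{+ω₁}`. -/
theorem stmt0 (β : Ordinal)
    (hsl : (aleph β).IsStrongLimit)
    (hcf : (aleph β).ord.cof = ℵ₀)
    (h2 : 2 ^ aleph β = aleph (β + (aleph 1).ord + 1)) :
    (aleph (β + (aleph 1).ord)).ord.cof = aleph 1 ∧
      aleph (β + (aleph 1).ord) < aleph (β + (aleph 1).ord) ^ ℵ₀ := by
  have hω₁ : Order.IsSuccLimit (aleph 1).ord := isSuccLimit_ord (aleph0_le_aleph 1)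
  refine ⟨by rw [cof_ord_aleph_add β hω₁, isRegular_aleph_one.cof_ord], ?_⟩
  calc aleph (β + (aleph 1).ord) < aleph (β + (aleph 1).ord + 1) :=
        aleph_lt_aleph.mpr (Order.lt_succ _)
    _ = 2 ^ aleph β := h2.symm
    _ ≤ aleph β ^ (aleph β).ord.cof := hsl.two_power_le_power_cof
    _ = aleph β ^ ℵ₀ := by rw [hcf]
    _ ≤ aleph (β + (aleph 1).ord) ^ ℵ₀ := power_le_power_right (aleph_le_aleph.mpr le_self_add)
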